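/- Assume μ_n < 0 (the defocusing case). Then g is strictly decreasing on (μ_n, ∞), and there exists a unique β̄ ∈ (μ_n, ∞) with g(β̄) = 0. Moreover g(β) > 0 for all β with μ_n < β < β̄, and g(β) < 0 for all β > β̄. -/

import Mathlib

open Set Finset

/-!
Each summand `β / (μⱼ - β) = -1 + (-μⱼ) / (β - μⱼ)` of `g` is strictly decreasing on `(μⱼ, ∞)`
because `μⱼ < 0`, so `g` is strictly decreasing on `(μₙ, ∞)`. On that interval `g 0 = 1`, while once
`β > -μⱼ` for every `j` each summand is below `-1/2`, so `g β < 1 - n/2 ≤ 0`. The intermediate value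
theorem gives a zero, and strict monotonicity makes it unique and fixes the signs on either side.
-/

noncomputable def secularFn {ι : Type*} [Fintype ι] (μ : ι → ℝ) (β : ℝ) : ℝ :=
  1 + β * ∑ j, 1 / (μ j - β)

lemma div_sub_self_strictAntiOn {a : ℝ} (ha : a < 0) :
    StrictAntiOn (fun β => β / (a - β)) (Ioi a) := by
  intro x hx y hy hxy
  have hx' : a - x < 0 := sub_neg.mpr hx
  have hy' : a - y < 0 := sub_neg.mpr hy
  have hdiff : x / (a - x) - y / (a - y) = a * (x - y) / ((a - x) * (a - y)) := by
    rw [div_sub_div _ _ hx'.ne hy'.ne]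
    ring
  have : 0 < a * (x - y) / ((a - x) * (a - y)) :=
    div_pos (mul_pos_of_neg_of_neg ha (sub_neg.mpr hxy)) (mul_pos_of_neg_of_neg hx' hy')
  simp only
  linarith

lemma div_sub_self_lt_neg_half {a β : ℝ} (ha : a < 0) (hβ : -a < β) :
    β / (a - β) < -1 / 2 := by
  rw [div_lt_iff_of_neg (by linarith)]
  linarith

namespace secularFn

variable {ι : Type*} [Fintype ι] {μ : ι → ℝ}

lemma eq_one_add_sum (μ : ι → ℝ) (β : ℝ) : secularFn μ β = 1 + ∑ j, β / (μ j - β) := by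
  simp only [secularFn, mul_sum, mul_one_div]

@[simp] lemma zero : secularFn μ 0 = 1 := by simp [secularFn]

lemma strictAntiOn [Nonempty ι] {m : ℝ} (hμ : ∀ j, μ j < 0) (hm : ∀ j, μ j ≤ m) :
    StrictAntiOn (secularFn μ) (Ioi m) := by
  intro x hx y hy hxy
  simp only [eq_one_add_sum]
  gcongr 1 + ?_
  refine sum_lt_sum_of_nonempty univ_nonempty fun j _ => ?_
  exact div_sub_self_strictAntiOn (hμ j) ((hm j).trans_lt hx) ((hm j).trans_lt hy) hxy

lemma continuousOn {m : ℝ} (hm : ∀ j, μ j ≤ m) : ContinuousOn (secularFn μ) (Ioi m) := by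
  unfold secularFn
  refine continuousOn_const.add (continuousOn_id.mul (continuousOn_finsetSum _ fun j _ => ?_))
  exact continuousOn_const.div (continuousOn_const.sub continuousOn_id)
    fun β hβ => sub_ne_zero.mpr ((hm j).trans_lt hβ).ne

lemma neg_of_forall_neg_lt (h2 : 2 ≤ Fintype.card ι) (hμ : ∀ j, μ j < 0) {β : ℝ}
    (hβ : ∀ j, -μ j < β) : secularFn μ β < 0 := by
  have : ∑ j, β / (μ j - β) < ∑ _j : ι, (-1 / 2 : ℝ) := by
    have : Nonempty ι := Fintype.card_pos_iff.mp (by omega)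
    exact sum_lt_sum_of_nonempty univ_nonempty fun j _ => div_sub_self_lt_neg_half (hμ j) (hβ j)
  have h2' : (2 : ℝ) ≤ Fintype.card ι := by exact_mod_cast h2
  rw [eq_one_add_sum]
  simp only [sum_const, card_univ, nsmul_eq_mul] at this
  linarith

lemma exists_pos_neg (h2 : 2 ≤ Fintype.card ι) (hμ : ∀ j, μ j < 0) :
    ∃ β, 0 < β ∧ secularFn μ β < 0 := by
  have hsum : 0 ≤ ∑ k, -μ k := sum_nonneg fun k _ => (neg_pos.mpr (hμ k)).le
  refine ⟨∑ k, -μ k + 1, by linarith, neg_of_forall_neg_lt h2 hμ fun j => ?_⟩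
  have := single_le_sum (f := fun k => -μ k) (fun k _ => (neg_pos.mpr (hμ k)).le) (mem_univ j)
  linarith

end secularFn

theorem defocusing_g_unique_zero (n : ℕ) (hn : 2 ≤ n) (μ : Fin n → ℝ) (hμ : Monotone μ)
    (g : ℝ → ℝ)
    (hg : ∀ β : ℝ, (∀ j, β ≠ μ j) → g β = 1 + β * ∑ j, 1 / (μ j - β))
    (hdef : μ ⟨n - 1, by omega⟩ < 0) :
    StrictAntiOn g (Ioi (μ ⟨n - 1, by omega⟩)) ∧
    ∃ βb : ℝ, μ ⟨n - 1, by omega⟩ < βb ∧ g βb = 0 ∧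
      (∀ β' : ℝ, μ ⟨n - 1, by omega⟩ < β' → g β' = 0 → β' = βb) ∧
      (∀ β : ℝ, μ ⟨n - 1, by omega⟩ < β → β < βb → 0 < g β) ∧
      (∀ β : ℝ, βb < β → g β < 0) := by
  set m := μ ⟨n - 1, by omega⟩
  have : Nonempty (Fin n) := ⟨⟨0, by omega⟩⟩
  have hm : ∀ j, μ j ≤ m := fun j => hμ (Fin.le_iff_val_le_val.mpr (by simp; omega))
  have hneg : ∀ j, μ j < 0 := fun j => (hm j).trans_lt hdef
  have hgF : EqOn g (secularFn μ) (Ioi m) := fun β hβ => hg β fun j => ((hm j).trans_lt hβ).ne'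
  have hanti : StrictAntiOn g (Ioi m) := (secularFn.strictAntiOn hneg hm).congr hgF.symm
  obtain ⟨b, hb, hgb⟩ := secularFn.exists_pos_neg (by simpa using hn) hneg
  obtain ⟨βb, hβb, hzero⟩ : ∃ βb ∈ Icc 0 b, secularFn μ βb = 0 :=
    intermediate_value_Icc' hb.le ((secularFn.continuousOn hm).mono fun β hβ => hdef.trans_le hβ.1)
      ⟨hgb.le, by simp⟩
  have hβbm : m < βb := hdef.trans_le hβb.1
  have hgzero : g βb = 0 := (hgF hβbm).trans hzero
  refine ⟨hanti, βb, hβbm, hgzero, fun β hβ hβ0 => hanti.injOn hβ hβbm (hβ0.trans hgzero.symm),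
    fun β hβ hlt => ?_, fun β hlt => ?_⟩
  · simpa [hgzero] using hanti hβ hβbm hlt
  · simpa [hgzero] using hanti hβbm (hβbm.trans hlt) hlt
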